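/- arXiv:1907.05204 — 8 statements merged into one kernel-verified Lean document; each statement's English description precedes it below -/
import Mathlib

section
/- If a sequence (d_n) of nonzero rational (or field) elements satisfies d_{n+1} d_{n-1} d_n^2 = α d_n + β for all n, and τ_n is a sequence of nonzero elements with d_n = τ_n τ_{n-2} / τ_{n-1}^2 for all n, then τ_n satisfies the Somos-4 recurrence τ_{n+2} τ_{n-2} = α τ_{n+1} τ_{n-1} + β τ_n^2 for all n. -/
/-!
Substituting `d n = τ n * τ (n - 2) / τ (n - 1) ^ 2` into the QRT relation at index `n + 1`,
all powers of `τ (n ± 1)` cancel and the relation becomes the Somos-4 relation centred at `n`,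
divided by `τ n ^ 2`.
-/

section TauSubstitution

variable {K : Type*} [Field K] {d τ : ℤ → K}

theorem qrt_lhs_eq_of_tau (hτ : ∀ n, τ n ≠ 0)
    (hd : ∀ n, d n = τ n * τ (n - 2) / τ (n - 1) ^ 2) (n : ℤ) :
    d (n + 1 + 1) * d (n + 1 - 1) * d (n + 1) ^ 2 = τ (n + 2) * τ (n - 2) / τ n ^ 2 := by
  have hprev := hτ (n - 1)
  have hnext := hτ (n + 1)
  rw [hd, hd, hd, show n + 1 + 1 - 2 = n by ring, show n + 1 + 1 - 1 = n + 1 by ring,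
    show n + 1 - 1 = n by ring, show n + 1 - 2 = n - 1 by ring, show n + 1 + 1 = n + 2 by ring]
  field_simp

theorem qrt_rhs_eq_of_tau (α β : K) (hτ : ∀ n, τ n ≠ 0)
    (hd : ∀ n, d n = τ n * τ (n - 2) / τ (n - 1) ^ 2) (n : ℤ) :
    α * d (n + 1) + β = (α * τ (n + 1) * τ (n - 1) + β * τ n ^ 2) / τ n ^ 2 := by
  have hcur := hτ n
  rw [hd, show n + 1 - 2 = n - 1 by ring, show n + 1 - 1 = n by ring]
  field_simp

end TauSubstitution

/-- If `d n = τ n * τ (n-2) / τ (n-1)^2` with all `τ n ≠ 0`, and `d` satisfies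
`d (n+1) * d (n-1) * (d n)^2 = α * d n + β`, then `τ` satisfies the Somos-4 recurrence. -/
theorem somos4_from_qrt {K : Type*} [Field K] (α β : K) (d τ : ℤ → K)
    (hτ : ∀ n, τ n ≠ 0)
    (hd : ∀ n, d n = τ n * τ (n - 2) / (τ (n - 1)) ^ 2)
    (hqrt : ∀ n, d (n + 1) * d (n - 1) * (d n) ^ 2 = α * d n + β) :
    ∀ n : ℤ, τ (n + 2) * τ (n - 2) = α * τ (n + 1) * τ (n - 1) + β * (τ n) ^ 2 := by
  intro n
  have h := hqrt (n + 1)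
  rw [qrt_lhs_eq_of_tau hτ hd, qrt_rhs_eq_of_tau α β hτ hd] at h
  exact (div_left_inj' (pow_ne_zero 2 (hτ n))).mp h
end

section
/- Let K be a field and f, u, v ∈ K with u ≠ 0. Suppose sequences (d_n), (v_n) in K satisfy d_{n+1} + d_n + v_n^2 + f = 0 and u(v_n - v) = -d_n d_{n+1}, with all d_n ≠ 0. Then for all n, d_{n+1} d_{n-1} = (α d_n + β) / d_n^2, where α = u^2 and β = u^2 (v^2 + f), provided additionally that u(X - v) = d_n (X^2 + f) - d_n (X - v_{n-1})(X - v_n) + d_n^2 holds as a polynomial identity in X for each n. -/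
/-!
Evaluating the polynomial identity at `X = v` kills its left-hand side and gives
`(v - w (n-1)) * (v - w n) = v ^ 2 + f + d n`. Multiplying the two instances
`d n * d (n+1) = u * (v - w n)` and `d n * d (n-1) = u * (v - w (n-1))` of the second
relation then yields `d (n+1) * d (n-1) * d n ^ 2 = u ^ 2 * (v ^ 2 + f + d n)`.
-/

open Polynomial

theorem sub_mul_sub_eq_of_polynomial_identity {R : Type*} [CommRing R] [IsDomain R]
    {a b d f u v : R} (hd : d ≠ 0)
    (h : C u * (X - C v) = C d * (X ^ 2 + C f) - C d * (X - C a) * (X - C b) + C (d ^ 2)) :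
    (v - a) * (v - b) = v ^ 2 + f + d := by
  have hv := congrArg (eval v) h
  simp only [eval_mul, eval_sub, eval_add, eval_pow, eval_X, eval_C, sub_self, mul_zero] at hv
  refine mul_left_cancel₀ hd ?_
  linear_combination hv

theorem genus1_qrt_general {K : Type*} [Field K] (f u v : K)
    (d w : ℤ → K) (hd : ∀ n, d n ≠ 0)
    (h2 : ∀ n : ℤ, u * (w n - v) = -(d n * d (n + 1)))
    (hpoly : ∀ n : ℤ,
      C u * (X - C v) =
        C (d n) * (X ^ 2 + C f) -
          C (d n) * (X - C (w (n - 1))) * (X - C (w n)) + C ((d n) ^ 2)) :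
    ∀ n : ℤ, d (n + 1) * d (n - 1) = (u ^ 2 * d n + u ^ 2 * (v ^ 2 + f)) / (d n) ^ 2 := by
  intro n
  have hfactor := sub_mul_sub_eq_of_polynomial_identity (hd n) (hpoly n)
  have hnext : d n * d (n + 1) = u * (v - w n) := by linear_combination h2 n
  have hprev : d n * d (n - 1) = u * (v - w (n - 1)) := by
    have h2prev := h2 (n - 1)
    rw [sub_add_cancel] at h2prev
    linear_combination h2prev
  rw [eq_div_iff (pow_ne_zero 2 (hd n))]
  linear_combination d n * d (n - 1) * hnext + u * (v - w n) * hprev + u ^ 2 * hfactor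

/-- Proposition 5.1 of the paper: for the genus-1 map, on a fixed level set of the
first integral `H = -u*v`, the quantity `d n` satisfies the symmetric QRT recurrence
`d (n+1) * d (n-1) = (α * d n + β) / (d n)^2` with `α = u^2`, `β = u^2 * (v^2 + f)`. -/
theorem genus1_qrt {K : Type*} [Field K] (f u v : K) (hu : u ≠ 0)
    (d w : ℤ → K) (hd : ∀ n, d n ≠ 0)
    (h1 : ∀ n : ℤ, d (n + 1) + d n + (w n) ^ 2 + f = 0)
    (h2 : ∀ n : ℤ, u * (w n - v) = -(d n * d (n + 1)))
    (hpoly : ∀ n : ℤ,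
      C u * (X - C v) =
        C (d n) * (X ^ 2 + C f) -
          C (d n) * (X - C (w (n - 1))) * (X - C (w n)) + C ((d n) ^ 2)) :
    ∀ n : ℤ, d (n + 1) * d (n - 1) = (u ^ 2 * d n + u ^ 2 * (v ^ 2 + f)) / (d n) ^ 2 :=
  genus1_qrt_general f u v d w hd h2 hpoly
end

section
/- Desnanot–Jacobi condensation for Hankel matrices: with Δ_n = det(s_{i+j-2})_{i,j=1,…,n}, Δ*_{n-1} the shifted Hankel determinant (last column shifted by one), and Δ'_{n-1} the determinant of the Hankel matrix of size n−1 with both last row and last column shifted by one (entries s_{i+j-2} except last row/column use index +1, i.e. delete row n−1 and column n−1 of the n×n Hankel matrix), the identity Δ_n Δ_{n-2} = Δ_{n-1} Δ'_{n-1} − (Δ*_{n-1})² holds. -/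
/-!
Jacobi's complementary minor theorem: for `A` with blocks indexed by `m ⊕ n` and `B = adj A`,
the product `A · [[1, B₁₂], [0, B₂₂]]` is block lower triangular with diagonal blocks `A₁₁` and
`det A • 1`, so `det A · det B₂₂ = (det A)^|n| · det A₁₁`. For the generic matrix over `ℤ[X_ij]`
one may cancel `det A`, and specializing yields `det B₂₂ = (det A)^(|n|-1) · det A₁₁` over every
commutative ring. When `|n| = 2` the entries of `B₂₂` are signed minors obtained by deleting one
of the last two rows and columns, which is Desnanot–Jacobi condensation; for a Hankel matrix,
symmetry identifies the two mixed minors.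
-/

/-- The `n × n` Hankel determinant `Δₙ = det (s_{i+j})_{0 ≤ i,j ≤ n-1}`. -/
noncomputable def hankelDet {K : Type*} [CommRing K] (s : ℕ → K) (n : ℕ) : K :=
  (Matrix.of fun i j : Fin n => s ((i : ℕ) + (j : ℕ))).det

theorem Fin.val_succAbove {n : ℕ} (p : Fin (n + 1)) (i : Fin n) :
    (p.succAbove i : ℕ) = if (i : ℕ) < p then (i : ℕ) else (i : ℕ) + 1 := by
  unfold Fin.succAbove
  split_ifs <;> simp_all [Fin.lt_def]

namespace Matrix

variable {R : Type*} [CommRing R]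

section Blocks

variable {m n : Type*} [Fintype m] [Fintype n] [DecidableEq m] [DecidableEq n]

theorem det_mul_det_adjugate_toBlocks₂₂ (A : Matrix (m ⊕ n) (m ⊕ n) R) :
    A.det * A.adjugate.toBlocks₂₂.det = A.det ^ Fintype.card n * A.toBlocks₁₁.det := by
  set B := A.adjugate
  have hAB : fromBlocks A.toBlocks₁₁ A.toBlocks₁₂ A.toBlocks₂₁ A.toBlocks₂₂ *
      fromBlocks B.toBlocks₁₁ B.toBlocks₁₂ B.toBlocks₂₁ B.toBlocks₂₂ =
      fromBlocks (A.det • 1) 0 0 (A.det • 1) := by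
    rw [fromBlocks_toBlocks, fromBlocks_toBlocks, A.mul_adjugate, ← fromBlocks_one,
      fromBlocks_smul, smul_zero, smul_zero]
  rw [fromBlocks_multiply, fromBlocks_inj] at hAB
  obtain ⟨-, h₁₂, -, h₂₂⟩ := hAB
  calc A.det * B.toBlocks₂₂.det = (A * fromBlocks 1 B.toBlocks₁₂ 0 B.toBlocks₂₂).det := by
        rw [det_mul, det_fromBlocks_zero₂₁, det_one, one_mul]
    _ = (fromBlocks A.toBlocks₁₁ 0 A.toBlocks₂₁ (A.det • 1)).det := by
        conv_lhs => rw [← fromBlocks_toBlocks A]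
        rw [fromBlocks_multiply, h₁₂, h₂₂]
        simp only [Matrix.mul_zero, Matrix.mul_one, add_zero]
    _ = A.det ^ Fintype.card n * A.toBlocks₁₁.det := by
        rw [det_fromBlocks_zero₁₂, det_smul, det_one, mul_one, mul_comm]

/-- **Jacobi's complementary minor theorem** -/
theorem det_adjugate_toBlocks₂₂ [Nonempty n] (A : Matrix (m ⊕ n) (m ⊕ n) R) :
    A.adjugate.toBlocks₂₂.det = A.det ^ (Fintype.card n - 1) * A.toBlocks₁₁.det := by
  let X := mvPolynomialX (m ⊕ n) (m ⊕ n) ℤ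
  suffices X.adjugate.toBlocks₂₂.det = X.det ^ (Fintype.card n - 1) * X.toBlocks₁₁.det by
    let f := MvPolynomial.aeval (R := ℤ) fun p : (m ⊕ n) × (m ⊕ n) => A p.1 p.2
    have h := congrArg f this
    rw [map_mul, map_pow, AlgHom.map_det, AlgHom.map_det, AlgHom.map_det] at h
    change (f.mapMatrix X.adjugate).toBlocks₂₂.det =
      (f.mapMatrix X).det ^ _ * (f.mapMatrix X).toBlocks₁₁.det at h
    rwa [AlgHom.map_adjugate, mvPolynomialX_mapMatrix_aeval] at h
  apply mul_left_cancel₀ (det_mvPolynomialX_ne_zero (m ⊕ n) ℤ)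
  rw [det_mul_det_adjugate_toBlocks₂₂, ← mul_assoc, ← pow_succ',
    Nat.sub_add_cancel Fintype.card_pos]

end Blocks

theorem det_adjugate_submatrix_natAdd_two {n : ℕ} (A : Matrix (Fin (n + 2)) (Fin (n + 2)) R) :
    (A.adjugate.submatrix (Fin.natAdd n) (Fin.natAdd n) : Matrix (Fin 2) (Fin 2) R).det =
      A.det * (A.submatrix (Fin.castAdd 2) (Fin.castAdd 2)).det := by
  have h := det_adjugate_toBlocks₂₂ (A.submatrix finSumFinEquiv finSumFinEquiv)
  rwa [adjugate_submatrix_equiv_self, det_submatrix_equiv_self, Fintype.card_fin, pow_one] at h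

theorem desnanot_jacobi {n : ℕ} (A : Matrix (Fin (n + 2)) (Fin (n + 2)) R) :
    A.det * (A.submatrix (Fin.castAdd 2) (Fin.castAdd 2)).det =
      (A.submatrix Fin.castSucc Fin.castSucc).det *
        (A.submatrix (Fin.last n).castSucc.succAbove (Fin.last n).castSucc.succAbove).det -
      (A.submatrix Fin.castSucc (Fin.last n).castSucc.succAbove).det *
        (A.submatrix (Fin.last n).castSucc.succAbove Fin.castSucc).det := by
  rw [← det_adjugate_submatrix_natAdd_two, det_fin_two]
  have h₀ : Fin.natAdd n (0 : Fin 2) = (Fin.last n).castSucc := rfl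
  have h₁ : Fin.natAdd n (1 : Fin 2) = Fin.last (n + 1) := rfl
  simp only [submatrix_apply, h₀, h₁, adjugate_fin_succ_eq_det_submatrix, Fin.succAbove_last,
    Fin.val_castSucc, Fin.val_last]
  rw [(Even.add_self n).neg_one_pow, (Even.add_self (n + 1)).neg_one_pow,
    Odd.neg_one_pow (⟨n, by ring⟩ : Odd (n + 1 + n)),
    Odd.neg_one_pow (⟨n, by ring⟩ : Odd (n + (n + 1)))]
  ring

variable {α : Type*}

def hankel (s : ℕ → α) (n : ℕ) : Matrix (Fin n) (Fin n) α :=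
  of fun i j => s (i + j)

theorem transpose_hankel (s : ℕ → α) (n : ℕ) : (hankel s n)ᵀ = hankel s n := by
  ext i j
  simp [hankel, add_comm]

end Matrix

open Matrix in
/-- Desnanot–Jacobi (Dodgson condensation) for the Hankel matrix of size `n = m + 2`:
`Δₙ Δ_{n-2} = Δ_{n-1} Δ'_{n-1} − (Δ*_{n-1})²`, where `Δ*_{n-1}` is the minor of the
`n × n` Hankel matrix deleting the last row and the second-to-last column, and
`Δ'_{n-1}` is the minor deleting the second-to-last row and column. -/
theorem hankel_dodgson {K : Type*} [CommRing K] (s : ℕ → K) (m : ℕ) :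
    hankelDet s (m + 2) * hankelDet s m =
      hankelDet s (m + 1) *
        (Matrix.of fun i j : Fin (m + 1) =>
          s ((if (i : ℕ) < m then (i : ℕ) else (i : ℕ) + 1) +
             (if (j : ℕ) < m then (j : ℕ) else (j : ℕ) + 1))).det
      - ((Matrix.of fun i j : Fin (m + 1) =>
          s ((i : ℕ) + (if (j : ℕ) < m then (j : ℕ) else (j : ℕ) + 1))).det) ^ 2 := by
  set H := hankel s (m + 2)
  set p := (Fin.last m).castSucc
  have hp (i : Fin (m + 1)) :
      (p.succAbove i : ℕ) = if (i : ℕ) < m then (i : ℕ) else (i : ℕ) + 1 := by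
    simp [p, Fin.val_succAbove]
  have hΔ' : (of fun i j : Fin (m + 1) =>
      s ((if (i : ℕ) < m then (i : ℕ) else i + 1) + (if (j : ℕ) < m then (j : ℕ) else j + 1))) =
      H.submatrix p.succAbove p.succAbove := by
    ext i j
    simp [H, hankel, hp]
  have hΔstar : (of fun i j : Fin (m + 1) => s (i + (if (j : ℕ) < m then (j : ℕ) else j + 1))) =
      H.submatrix Fin.castSucc p.succAbove := by
    ext i j
    simp [H, hankel, hp]
  have hsymm : (H.submatrix p.succAbove Fin.castSucc).det =
      (H.submatrix Fin.castSucc p.succAbove).det := by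
    rw [← det_transpose, transpose_submatrix, transpose_hankel]
  have h := desnanot_jacobi H
  rw [hsymm] at h
  rwa [hΔ', hΔstar, sq]
end

section
/- With the Hankel-column notation above (columns c_j ∈ K^n built from a sequence (s_j)), the alternating sum ∑_{j=0}^{n} (−1)^j det[c_0 ⋯ ĉ_j ⋯ c_n ; bottom row (s_{j+1}, …, ŝ_{2j+1}, …, s_{n+j+1})] = 0, where each summand is the (n+1)×(n+1) determinant whose first n rows are the Hankel columns c_0, …, c_n with c_j omitted, and whose last row consists of s_{k+j+1} in the column originally indexed k (k ≠ j). -/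
theorem Finset.sum_sum_mul_eq_zero_of_symm_of_alt {ι R : Type*} [Fintype ι] [CommRing R]
    (S D : ι → ι → R) (hS : ∀ i j, S i j = S j i) (hD : ∀ i j, D i j = -D j i)
    (hD₀ : ∀ i, D i i = 0) :
    ∑ i, ∑ j, S i j * D i j = 0 := by
  rw [← Finset.sum_product']
  refine Finset.sum_ninvolution Prod.swap (fun ⟨i, j⟩ => ?_) (fun ⟨i, j⟩ h hij => ?_)
    (fun _ => Finset.mem_univ _) Prod.swap_swap
  · simp only [Prod.swap_prod_mk, hS j i, hD j i]
    ring
  · obtain rfl : j = i := congrArg Prod.fst hij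
    exact h (by rw [hD₀, mul_zero])

namespace Matrix

variable {K : Type*}

def appendRow {m : ℕ} {n : Type*} (A : Matrix (Fin m) n K) (v : n → K) :
    Matrix (Fin (m + 1)) n K :=
  of (Fin.snoc (α := fun _ => n → K) A v)

section appendRow

variable {m : ℕ} {n : Type*} (A : Matrix (Fin m) n K) (v : n → K)

@[simp]
theorem appendRow_last : appendRow A v (Fin.last m) = v :=
  Fin.snoc_last (α := fun _ => n → K) (p := A) v

@[simp]
theorem appendRow_castSucc (i : Fin m) : appendRow A v i.castSucc = A i :=
  Fin.snoc_castSucc (α := fun _ => n → K) (p := A) (x := v) (i := i)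

end appendRow

section det

variable [CommRing K] {m : ℕ}

theorem det_appendRow (A : Matrix (Fin m) (Fin (m + 1)) K) (v : Fin (m + 1) → K) :
    (appendRow A v).det =
      ∑ c : Fin (m + 1), (-1) ^ (m + (c : ℕ)) * v c * (A.submatrix id c.succAbove).det := by
  rw [det_succ_row _ (Fin.last m)]
  simp [Fin.succAbove_last, submatrix]

theorem det_appendRow_single (A : Matrix (Fin m) (Fin (m + 1)) K) (c : Fin (m + 1)) :
    (appendRow A (Pi.single c 1)).det =
      (-1) ^ (m + (c : ℕ)) * (A.submatrix id c.succAbove).det := by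
  rw [det_appendRow, Finset.sum_eq_single c (fun d _ hd => by simp [hd]) (by simp)]
  simp

theorem det_appendRow_eq_sum_single (A : Matrix (Fin m) (Fin (m + 1)) K) (v : Fin (m + 1) → K) :
    (appendRow A v).det = ∑ c, v c * (appendRow A (Pi.single c 1)).det := by
  rw [det_appendRow]
  refine Finset.sum_congr rfl fun c _ => ?_
  rw [det_appendRow_single]
  ring

theorem det_appendRow_appendRow_self (H : Matrix (Fin m) (Fin (m + 2)) K) (u : Fin (m + 2) → K) :
    (appendRow (appendRow H u) u).det = 0 :=
  det_zero_of_row_eq (i := (Fin.last m).castSucc) (Fin.castSucc_lt_last _).ne (by simp)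

theorem det_appendRow_appendRow_swap (H : Matrix (Fin m) (Fin (m + 2)) K)
    (u v : Fin (m + 2) → K) :
    (appendRow (appendRow H v) u).det = -(appendRow (appendRow H u) v).det := by
  have hswap : appendRow (appendRow H v) u = (appendRow (appendRow H u) v).submatrix
      (Equiv.swap (Fin.last m).castSucc (Fin.last (m + 1))) id := by
    ext i c
    rcases Fin.eq_castSucc_or_eq_last i with ⟨i, rfl⟩ | rfl
    · rcases Fin.eq_castSucc_or_eq_last i with ⟨i, rfl⟩ | rfl
      · rw [submatrix_apply, Equiv.swap_apply_of_ne_of_ne] <;> simp [Fin.ext_iff] <;> omega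
      · simp
    · simp
  rw [hswap, det_permute, Equiv.Perm.sign_swap (Fin.castSucc_lt_last _).ne]
  simp

theorem sum_neg_one_pow_mul_det_appendRow_submatrix_succAbove
    (H : Matrix (Fin m) (Fin (m + 2)) K) (S : Fin (m + 2) → Fin (m + 2) → K)
    (hS : ∀ j c, S j c = S c j) :
    ∑ j : Fin (m + 2), (-1) ^ (j : ℕ) * ((appendRow H (S j)).submatrix id j.succAbove).det =
      0 := by
  have hsign (j : ℕ) : (-1 : K) ^ (m + 1) * (-1) ^ (m + 1 + j) = (-1) ^ j := by
    rw [← pow_add, ← add_assoc, ← two_mul, pow_add, pow_mul, neg_one_sq, one_pow, one_mul]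
  calc ∑ j : Fin (m + 2), (-1) ^ (j : ℕ) * ((appendRow H (S j)).submatrix id j.succAbove).det
      = (-1) ^ (m + 1) * ∑ j, (appendRow (appendRow H (S j)) (Pi.single j 1)).det := by
        simp only [Finset.mul_sum, det_appendRow_single, ← mul_assoc, hsign]
    _ = (-1) ^ (m + 1) * ∑ j, ∑ c, S j c * (appendRow (appendRow H (Pi.single c 1))
          (Pi.single j 1)).det := by
        congr 1
        refine Finset.sum_congr rfl fun j _ => ?_
        rw [det_appendRow_appendRow_swap, det_appendRow_eq_sum_single, ← Finset.sum_neg_distrib]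
        refine Finset.sum_congr rfl fun c _ => ?_
        rw [det_appendRow_appendRow_swap H (Pi.single c 1), mul_neg, neg_neg]
    _ = 0 := by
        rw [Finset.sum_sum_mul_eq_zero_of_symm_of_alt _ _ hS
          (fun _ _ => det_appendRow_appendRow_swap ..) (fun _ => det_appendRow_appendRow_self ..),
          mul_zero]

end det

end Matrix

/-- The vanishing alternating sum of the appendix: with Hankel columns
`c_k = (s_k, …, s_{k+n-2})ᵀ`, the sum
`∑_{j=0}^{n} (−1)ʲ det [c₀ ⋯ ĉⱼ ⋯ cₙ ; (s_{k+j+1})ₖ] = 0`,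
where each summand is the `n × n` determinant whose first `n − 1` rows come from
the columns `c₀, …, cₙ` with `cⱼ` omitted and whose last row has entry `s_{c+j+1}`
in the column originally indexed `c`. -/
theorem hankel_alternating_sum {K : Type*} [CommRing K] (s : ℕ → K) (n : ℕ) (hn : 1 ≤ n) :
    ∑ j : Fin (n + 1), (-1 : K) ^ (j : ℕ) *
      (Matrix.of fun i k : Fin n =>
        if (i : ℕ) < n - 1 then
          s ((if (k : ℕ) < (j : ℕ) then (k : ℕ) else (k : ℕ) + 1) + (i : ℕ))
        else
          s ((if (k : ℕ) < (j : ℕ) then (k : ℕ) else (k : ℕ) + 1) + (j : ℕ) + 1)).det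
      = 0 := by
  obtain ⟨m, rfl⟩ : ∃ m, n = m + 1 := ⟨n - 1, by omega⟩
  convert Matrix.sum_neg_one_pow_mul_det_appendRow_submatrix_succAbove
    (Matrix.of fun i c => s (c + i)) (fun j c => s (c + j + 1))
    (fun j c => congrArg s (by omega)) using 4 with j
  ext i k
  rcases Fin.eq_castSucc_or_eq_last i with ⟨i, rfl⟩ | rfl <;> simp [Fin.val_succAbove]
end

section
/- If G ∈ K[[X⁻¹]] is a formal power series G = ∑_{j≥1} s_{j-1} X^{-j} satisfying the quadratic equation P₁ G + (1/2) Q₀ G² = (1/2) Q₁, where P₁(X) = X² + f + 2d₁, Q₀(X) = u₀(X − v₀), Q₁(X) = u₁(X − v₁), and 4 d₁ + u₁ u₀ = 0 with u₀, u₁ ≠ 0, then s₀ = u₁/2, s₁ = −s₀ v₁, and for j ≥ 2 the coefficients satisfy s_j = −(2d₁ + f) s_{j-2} + (d₁/s₀)(∑_{i=0}^{j-2} s_i s_{j-2-i} − v₀ ∑_{i=0}^{j-3} s_i s_{j-3-i}). -/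
/-!
Comparing coefficients of `tⁿ` in the functional equation gives `s₀ = u₁/2`, `s₁ = -s₀ v₁` and,
for `n ≥ 2`, `s_n + (f + 2d₁) s_{n-2} + (u₀/2) (c_{n-2} - v₀ c_{n-3}) = 0`, where `c_m` is the
`m`-th coefficient of `S²` (and `c_{-1} = 0`). Since `s₀ = u₁/2` and `u₀ u₁ = -4d₁`, the factor
`u₀/2` equals `-d₁/s₀`.
-/

open PowerSeries

theorem coeff_X_mul_mk_sq {R : Type*} [CommSemiring R] (s : ℕ → R) (m : ℕ) :
    coeff m (X * mk s ^ 2) = ∑ i ∈ Finset.range m, s i * s (m - 1 - i) := by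
  cases m with
  | zero => simp
  | succ k =>
    rw [coeff_succ_X_mul, sq, coeff_mul, Finset.Nat.sum_antidiagonal_eq_sum_range_succ_mk]
    simp

theorem coeff_eq_of_quadratic_eq {R : Type*} [CommRing R] {a b c v w : R} {s : ℕ → R}
    (h : mk s + C a * X ^ 2 * mk s + C b * (X ^ 2 * mk s ^ 2 - C v * X ^ 3 * mk s ^ 2)
      = C c * (1 - C w * X)) :
    s 0 = c ∧ s 1 = -(c * w) ∧ ∀ n, s (n + 2) + a * s n
      + b * (coeff (n + 1) (X * mk s ^ 2) - v * coeff n (X * mk s ^ 2)) = 0 := by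
  have h' : mk s + C a * X ^ 2 * mk s
      + C b * (X * (X * mk s ^ 2) - C v * X ^ 2 * (X * mk s ^ 2)) = C c * (1 - C w * X) := by
    rw [← h]; ring
  refine ⟨?_, ?_, fun n => ?_⟩
  · simpa using congrArg (coeff 0) h'
  · simpa [mul_assoc, coeff_X_pow_mul', coeff_X] using congrArg (coeff 1) h'
  · simpa [mul_assoc, coeff_X_pow_mul', coeff_X, mul_sub] using congrArg (coeff (n + 2)) h'

/-- The genus-1 moment recursion: if `G = ∑_{j≥1} s_{j-1} X^{-j}` satisfies
`P₁ G + (1/2) Q₀ G² = (1/2) Q₁` with `P₁ = X² + f + 2d₁`, `Q₀ = u₀(X − v₀)`,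
`Q₁ = u₁(X − v₁)`, `u₀ u₁ = −4 d₁ ≠ 0`, then `s₀ = u₁/2`, `s₁ = −s₀ v₁`, and
`s_j = −(2d₁ + f) s_{j-2} + (d₁/s₀)(∑_{i=0}^{j-2} s_i s_{j-2-i} − v₀ ∑_{i=0}^{j-3} s_i s_{j-3-i})`.
The functional equation is encoded in `K[[t]]` with `t = X⁻¹`, `G = t·S`,
`S = ∑_{j≥0} s_j tʲ`, after multiplying through by `t`. -/
theorem genus1_moment_recursion {K : Type*} [Field K] (htwo : (2 : K) ≠ 0)
    (f d1 u0 u1 v0 v1 : K) (hu : u0 * u1 = -4 * d1) (hd : d1 ≠ 0) (s : ℕ → K)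
    (hG : PowerSeries.mk s
        + PowerSeries.C (f + 2 * d1) * PowerSeries.X ^ 2 * PowerSeries.mk s
        + PowerSeries.C (u0 / 2) *
            (PowerSeries.X ^ 2 * (PowerSeries.mk s) ^ 2
              - PowerSeries.C v0 * PowerSeries.X ^ 3 * (PowerSeries.mk s) ^ 2)
      = PowerSeries.C (u1 / 2) * (1 - PowerSeries.C v1 * PowerSeries.X)) :
    s 0 = u1 / 2 ∧ s 1 = -(s 0 * v1) ∧
      ∀ j, 2 ≤ j →
        s j = -(2 * d1 + f) * s (j - 2)
          + (d1 / s 0) * ((∑ i ∈ Finset.range (j - 1), s i * s (j - 2 - i))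
              - v0 * ∑ i ∈ Finset.range (j - 2), s i * s (j - 3 - i)) := by
  obtain ⟨hs0, hs1, hrec⟩ := coeff_eq_of_quadratic_eq hG
  have hu1 : u1 ≠ 0 := by
    rintro rfl
    exact hd (by simpa [htwo] using (by linear_combination hu : (2 : K) * 2 * d1 = 0))
  have hratio : d1 / s 0 = -(u0 / 2) := by
    rw [hs0]
    field_simp
    linear_combination hu
  refine ⟨hs0, hs0 ▸ hs1, fun j hj => ?_⟩
  obtain ⟨n, rfl⟩ := Nat.exists_eq_add_of_le' hj
  have hn := hrec n
  rw [coeff_X_mul_mk_sq, coeff_X_mul_mk_sq, Nat.add_sub_cancel] at hn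
  rw [hratio, Nat.add_sub_cancel, show n + 2 - 1 = n + 1 by omega,
    show n + 2 - 3 = n - 1 by omega]
  linear_combination hn
end

section
/- For the genus-2 map defined by the four relations d_{n+1}(e_{n+1}+v_{n+1}+v_n) = d_n(e_n+v_n+v_{n-1}), v_n(d_{n+1}e_{n+1} − d_n e_n) = d_{n+1}w_{n+1} − d_n w_{n-1}, d_{n+1} + d_n + f = w_n − v_n², and d_{n+1}e_{n+1} + d_n e_n + g = v_n w_n, together with the constraints (3.14)–(3.17): d_n(e_n + v_n + v_{n-1}) = 0, u = d_n(d_n − v_n v_{n-1} − w_n − w_{n-1} + f), the quantities H₁ = d_n(2 d_n e_n + v_n w_{n-1} + v_{n-1} w_n + f e_n + g) and H₂ = d_n(d_n e_n² − w_n w_{n-1} + g e_n) are conserved: H₁ and H₂ take the same value at step n+1 as at step n. -/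
/-!
Put `X = d_{n+1} e_{n+1} - d_n e_n`. The relation `v_n X = d_{n+1} w_{n+1} - d_n w_{n-1}` turns the
increment of `H₂` into `X` times the defect of `d_{n+1} e_{n+1} + d_n e_n + g = v_n w_n`. Since
`d_n ≠ 0`, the constraint `d_n (e_n + v_n + v_{n-1}) = 0` gives `e_n = -(v_n + v_{n-1})` for every `n`;
with it and the same two relations, the increment of `H₁` becomes `X` times the defect of
`d_{n+1} + d_n + f = w_n - v_n²`.
-/

section Genus2

variable {R : Type*} [CommRing R] (f g : R) (d e v w : ℤ → R)

def genus2H₁ (n : ℤ) : R :=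
  d n * (2 * d n * e n + v n * w (n - 1) + v (n - 1) * w n + f * e n + g)

def genus2H₂ (n : ℤ) : R :=
  d n * (d n * e n ^ 2 - w n * w (n - 1) + g * e n)

variable {f g d e v w}

theorem genus2H₂_succ {n : ℤ}
    (h2 : v n * (d (n + 1) * e (n + 1) - d n * e n) = d (n + 1) * w (n + 1) - d n * w (n - 1))
    (h4 : d (n + 1) * e (n + 1) + d n * e n + g = v n * w n) :
    genus2H₂ g d e w (n + 1) = genus2H₂ g d e w n := by
  simp only [genus2H₂, add_sub_cancel_right]
  linear_combination w n * h2 + (d (n + 1) * e (n + 1) - d n * e n) * h4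

theorem genus2H₁_succ {n : ℤ} (he : ∀ m, e m + v m + v (m - 1) = 0)
    (h2 : v n * (d (n + 1) * e (n + 1) - d n * e n) = d (n + 1) * w (n + 1) - d n * w (n - 1))
    (h3 : d (n + 1) + d n + f = w n - v n ^ 2)
    (h4 : d (n + 1) * e (n + 1) + d n * e n + g = v n * w n) :
    genus2H₁ f g d e v w (n + 1) = genus2H₁ f g d e v w n := by
  have he₀ := he n
  have he₁ := he (n + 1)
  rw [add_sub_cancel_right] at he₁
  simp only [genus2H₁, add_sub_cancel_right]
  linear_combination (-v n) * h2 + (d (n + 1) * e (n + 1) - d n * e n) * h3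
    + (d (n + 1) - d n) * h4 + d (n + 1) * w n * he₁ - d n * w n * he₀

end Genus2

theorem genus2_first_integrals_general {K : Type*} [Field K] (f g : K)
    (d e v w : ℤ → K) (hd : ∀ n, d n ≠ 0)
    (h2 : ∀ n : ℤ, v n * (d (n + 1) * e (n + 1) - d n * e n) = d (n + 1) * w (n + 1) - d n * w (n - 1))
    (h3 : ∀ n : ℤ, d (n + 1) + d n + f = w n - (v n) ^ 2)
    (h4 : ∀ n : ℤ, d (n + 1) * e (n + 1) + d n * e n + g = v n * w n)
    (h5 : ∀ n : ℤ, d n * (e n + v n + v (n - 1)) = 0) :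
    ∀ n : ℤ,
      d (n + 1) * (2 * d (n + 1) * e (n + 1) + v (n + 1) * w n + v n * w (n + 1)
          + f * e (n + 1) + g)
        = d n * (2 * d n * e n + v n * w (n - 1) + v (n - 1) * w n + f * e n + g) ∧
      d (n + 1) * (d (n + 1) * (e (n + 1)) ^ 2 - w (n + 1) * w n + g * e (n + 1))
        = d n * (d n * (e n) ^ 2 - w n * w (n - 1) + g * e n) := by
  intro n
  have he : ∀ m, e m + v m + v (m - 1) = 0 := fun m => (mul_eq_zero.mp (h5 m)).resolve_left (hd m)
  have H₁ := genus2H₁_succ he (h2 n) (h3 n) (h4 n)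
  have H₂ := genus2H₂_succ (h2 n) (h4 n)
  simp only [genus2H₁, genus2H₂, add_sub_cancel_right] at H₁ H₂
  exact ⟨H₁, H₂⟩

/-- Conservation of the genus-2 first integrals `H₁ = −uv` and `H₂ = uw`:
under the genus-2 relations (3.10)–(3.13) and the spectral-curve constraints
(3.14)–(3.15), the quantities
`H₁ = dₙ(2 dₙ eₙ + vₙ w_{n-1} + v_{n-1} wₙ + f eₙ + g)` and
`H₂ = dₙ(dₙ eₙ² − wₙ w_{n-1} + g eₙ)` take the same value at step `n+1` as at step `n`. -/
theorem genus2_first_integrals {K : Type*} [Field K] (f g u : K)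
    (d e v w : ℤ → K) (hd : ∀ n, d n ≠ 0)
    (h1 : ∀ n : ℤ, d (n + 1) * (e (n + 1) + v (n + 1) + v n) = d n * (e n + v n + v (n - 1)))
    (h2 : ∀ n : ℤ, v n * (d (n + 1) * e (n + 1) - d n * e n) = d (n + 1) * w (n + 1) - d n * w (n - 1))
    (h3 : ∀ n : ℤ, d (n + 1) + d n + f = w n - (v n) ^ 2)
    (h4 : ∀ n : ℤ, d (n + 1) * e (n + 1) + d n * e n + g = v n * w n)
    (h5 : ∀ n : ℤ, d n * (e n + v n + v (n - 1)) = 0)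
    (h6 : ∀ n : ℤ, u = d n * (d n - v n * v (n - 1) - w n - w (n - 1) + f)) :
    ∀ n : ℤ,
      d (n + 1) * (2 * d (n + 1) * e (n + 1) + v (n + 1) * w n + v n * w (n + 1)
          + f * e (n + 1) + g)
        = d n * (2 * d n * e n + v n * w (n - 1) + v (n - 1) * w n + f * e n + g) ∧
      d (n + 1) * (d (n + 1) * (e (n + 1)) ^ 2 - w (n + 1) * w n + g * e (n + 1))
        = d n * (d n * (e n) ^ 2 - w n * w (n - 1) + g * e n) :=
  genus2_first_integrals_general f g d e v w hd h2 h3 h4 h5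
end

section
/- Let P, Q, R ∈ K[ζ] and define d₀ = −(1/4)·(coefficient of ζ^g in Q), v₀ = (1/(4 d₀))·(coefficient of ζ^{g-1} in Q), with d₀ ≠ 0. Define P̃, Q̃, R̃ by R̃ = −Q/(4 d₀), P̃ = −P + 2(ζ + v₀) R̃, and Q̃ = −2[(ζ + v₀)(P̃ − P) + 2 d₀ R]. Then the 2×2 discrete Lax equation L·M = M·L̃ holds, where L = [[P, R],[Q, −P]], L̃ = [[P̃, R̃],[Q̃, −P̃]], and M = [[ζ + v₀, 1/2],[−2 d₀, 0]]. Moreover P̃² + Q̃ R̃ = P² + Q R. -/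
/-!
The Lax equation `L M = M L̃` is a polynomial identity in the entries once one knows
`2 · (1/2) = 1` and `4 · (−1/(4d₀)) · d₀ = −1`. It says `L̃ = M⁻¹ L M`, so `det L̃ = det L`
because `det M = d₀ ≠ 0`; and `−det L = P² + Q R`.
-/

open Polynomial Matrix

section LaxPair

variable {A : Type*} [CommRing A]

theorem lax_equation_of_transform {P Q R P' Q' R' z h d r : A} (hh : 2 * h = 1)
    (hrd : 4 * r * d = -1) (hR' : R' = r * Q) (hP' : P' = -P + 2 * z * R')
    (hQ' : Q' = -2 * (z * (P' - P) + 2 * d * R)) :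
    !![P, R; Q, -P] * !![z, h; -2 * d, 0] = !![z, h; -2 * d, 0] * !![P', R'; Q', -P'] := by
  subst hQ' hP' hR'
  rw [mul_fin_two, mul_fin_two]
  ext i j
  fin_cases i <;> fin_cases j <;> simp only [Fin.zero_eta, Fin.mk_one, of_apply, cons_val',
    cons_val_zero, cons_val_one, empty_val', cons_val_fin_one]
  · linear_combination (-2 * z * P + 2 * z ^ 2 * r * Q + 2 * d * R) * hh
  · linear_combination z * r * Q * hh
  · linear_combination z * Q * hrd
  · linear_combination h * Q * hrd - 2 * r * d * Q * hh

theorem det_eq_of_mul_eq_mul [IsDomain A] {n : Type*} [Fintype n] [DecidableEq n]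
    {L M L' : Matrix n n A} (hlax : L * M = M * L') (hM : M.det ≠ 0) : L.det = L'.det := by
  have := congrArg det hlax
  rw [det_mul, det_mul, mul_comm] at this
  exact mul_left_cancel₀ hM this

theorem neg_det_traceless_fin_two (P Q R : A) : -det !![P, R; Q, -P] = P ^ 2 + Q * R := by
  rw [det_fin_two_of]; ring

theorem det_step_fin_two {z h d : A} (hh : 2 * h = 1) : det !![z, h; -2 * d, 0] = d := by
  rw [det_fin_two_of]; linear_combination d * hh

end LaxPair

theorem poisson_map_lax_general {K : Type*} [Field K] (htwo : (2 : K) ≠ 0)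
    (P Q R : K[X]) (d0 : K) (hd0 : d0 ≠ 0) (v0 : K) (R' P' Q' : K[X])
    (hR' : R' = C (-(1 / (4 * d0))) * Q)
    (hP' : P' = -P + 2 * (X + C v0) * R')
    (hQ' : Q' = -2 * ((X + C v0) * (P' - P) + C (2 * d0) * R)) :
    (Matrix.of ![![P, R], ![Q, -P]]) *
        (Matrix.of ![![X + C v0, C (1 / 2)], ![C (-2 * d0), 0]]) =
      (Matrix.of ![![X + C v0, C (1 / 2)], ![C (-2 * d0), 0]]) *
        (Matrix.of ![![P', R'], ![Q', -P']]) ∧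
      P' ^ 2 + Q' * R' = P ^ 2 + Q * R := by
  have hhalf : 2 * C (1 / 2 : K) = 1 := by
    rw [← C_ofNat, ← C_mul, mul_one_div_cancel htwo, C_1]
  have hrd : 4 * C (-(1 / (4 * d0))) * C d0 = -1 := by
    rw [← C_ofNat, ← C_mul, ← C_mul, ← C_1, ← C_neg]
    have h4 : (4 : K) ≠ 0 := by simpa [show (4 : K) = 2 * 2 by norm_num] using htwo
    congr 1
    field_simp
  rw [C_mul, C_ofNat] at hQ'
  rw [C_mul, C_neg, C_ofNat]
  have hlax := lax_equation_of_transform hhalf hrd hR' hP' hQ'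
  refine ⟨hlax, ?_⟩
  rw [← neg_det_traceless_fin_two, ← neg_det_traceless_fin_two,
    det_eq_of_mul_eq_mul hlax (by rwa [det_step_fin_two hhalf, Ne, C_eq_zero])]

/-- The transformation (6.8) of the paper: given `P` monic of degree `g+1`, `R` monic of
degree `g`, `Q` of degree `g` with leading coefficient `−4d₀ ≠ 0`, set
`v₀ = (1/(4d₀))·(coeff of ζ^{g-1} in Q)`, `R̃ = −Q/(4d₀)`, `P̃ = −P + 2(ζ + v₀)R̃`,
`Q̃ = −2[(ζ + v₀)(P̃ − P) + 2d₀ R]`. Then the discrete Lax equation `L·M = M·L̃` holds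
with `M = [[ζ + v₀, 1/2],[−2d₀, 0]]`, and `P̃² + Q̃ R̃ = P² + Q R`. -/
theorem poisson_map_lax {K : Type*} [Field K] (htwo : (2 : K) ≠ 0) (g : ℕ) (hg : 1 ≤ g)
    (P Q R : K[X]) (hP : P.Monic) (hPdeg : P.natDegree = g + 1)
    (hR : R.Monic) (hRdeg : R.natDegree = g) (hQdeg : Q.natDegree = g)
    (d0 : K) (hd0 : d0 ≠ 0) (hQlead : Q.coeff g = -4 * d0)
    (v0 : K) (hv0 : v0 = (1 / (4 * d0)) * Q.coeff (g - 1))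
    (R' P' Q' : K[X])
    (hR' : R' = C (-(1 / (4 * d0))) * Q)
    (hP' : P' = -P + 2 * (X + C v0) * R')
    (hQ' : Q' = -2 * ((X + C v0) * (P' - P) + C (2 * d0) * R)) :
    (Matrix.of ![![P, R], ![Q, -P]]) *
        (Matrix.of ![![X + C v0, C (1 / 2)], ![C (-2 * d0), 0]]) =
      (Matrix.of ![![X + C v0, C (1 / 2)], ![C (-2 * d0), 0]]) *
        (Matrix.of ![![P', R'], ![Q', -P']]) ∧
      P' ^ 2 + Q' * R' = P ^ 2 + Q * R :=
  poisson_map_lax_general htwo P Q R d0 hd0 v0 R' P' Q' hR' hP' hQ'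
end

section
/- If τ : ℤ → K^× satisfies a Somos-8 relation α₁ τ_{n+8} τ_n + α₂ τ_{n+7} τ_{n+1} + α₃ τ_{n+6} τ_{n+2} + α₄ τ_{n+5} τ_{n+3} + α₅ τ_{n+4}² = 0 for all n with fixed α₁,…,α₅ not all zero, then for every n the 5×5 matrix with rows (τ_{n+4+k} τ_{n-4+k}, τ_{n+3+k} τ_{n-3+k}, τ_{n+2+k} τ_{n-2+k}, τ_{n+1+k} τ_{n-1+k}, τ_{n+k}²) for k = 0,1,2,3,4 has determinant zero. Conversely, if this determinant vanishes for all n and the ratios of appropriate 4×4 minors are independent of n, then τ satisfies a Somos-8 relation with constant coefficients. -/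
/-- The `5 × 5` matrix of equation (5.4) of the paper, with rows
`(τ_{n+4+k} τ_{n-4+k}, τ_{n+3+k} τ_{n-3+k}, τ_{n+2+k} τ_{n-2+k}, τ_{n+1+k} τ_{n-1+k}, τ_{n+k}²)`
for `k = 0, 1, 2, 3, 4`. -/
noncomputable def somos8Mat {K : Type*} [Field K] (τ : ℤ → K) (n : ℤ) :
    Matrix (Fin 5) (Fin 5) K :=
  Matrix.of fun k j =>
    τ (n + (k : ℤ) + (4 - ((j : ℕ) : ℤ))) * τ (n + (k : ℤ) - (4 - ((j : ℕ) : ℤ)))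

/-- The `4 × 4` minor `D̂_{j,n}` formed from the first four rows of `somos8Mat τ n`
with column `j` deleted. -/
noncomputable def somos8Minor {K : Type*} [Field K] (τ : ℤ → K) (j : Fin 5) (n : ℤ) : K :=
  (Matrix.of fun k l : Fin 4 => somos8Mat τ n k.castSucc (j.succAbove l)).det

/-!
Row `k` of `somos8Mat τ n` is the last row of `somos8Mat τ (n + k - 4)`, and pairing the last row
of `somos8Mat τ m` with a coefficient vector gives the Somos-8 expression at `m`. So a Somos-8
relation is a nonzero kernel vector of every `somos8Mat τ n`. Conversely, expanding the vanishing
determinant along the last row gives a relation at `n` whose coefficients are the signed minors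
`D̂_{j,n}`; constancy of the ratios `D̂_{j,n}/D̂_{1,n}` lets one replace them by `D̂_{j,0}`.
-/

open Matrix Finset

lemma mul_eq_mul_of_mul_add_one_eq {K : Type*} [Field K] {f g : ℤ → K} (hg : ∀ n, g n ≠ 0)
    (h : ∀ n, f n * g (n + 1) = f (n + 1) * g n) (m : ℤ) : f m * g 0 = f 0 * g m := by
  have hper : Function.Periodic (fun n => f n / g n) 1 := fun n => by
    rw [div_eq_div_iff (hg _) (hg _)]
    exact (h n).symm
  have := hper.int_mul_eq m
  simp only [mul_one] at this
  rwa [div_eq_div_iff (hg _) (hg _)] at this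

section Somos8

variable {K : Type*} [Field K] (τ : ℤ → K)

lemma somos8Mat_apply_eq_lastRow (n : ℤ) (k j : Fin 5) :
    somos8Mat τ n k j = somos8Mat τ (n + k - 4) 4 j := by
  simp only [somos8Mat, of_apply]
  congr 2 <;> norm_num

lemma sum_mul_somos8Mat_lastRow (α : Fin 5 → K) (n : ℤ) :
    ∑ j, α j * somos8Mat τ n 4 j =
      α 0 * (τ (n + 8) * τ n) + α 1 * (τ (n + 7) * τ (n + 1))
        + α 2 * (τ (n + 6) * τ (n + 2)) + α 3 * (τ (n + 5) * τ (n + 3))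
        + α 4 * (τ (n + 4)) ^ 2 := by
  simp only [Fin.sum_univ_five, somos8Mat, of_apply]
  norm_num
  ring_nf

lemma det_somos8Mat_eq_sum (n : ℤ) :
    (somos8Mat τ n).det =
      ∑ j : Fin 5, (-1) ^ (j : ℕ) * somos8Mat τ n 4 j * somos8Minor τ j n := by
  rw [det_succ_row _ (Fin.last 4)]
  refine sum_congr rfl fun j _ => ?_
  rw [Fin.succAbove_last, show Fin.last 4 = (4 : Fin 5) from rfl]
  norm_num [somos8Minor, pow_add, submatrix]

lemma det_somos8Mat_eq_zero {α : Fin 5 → K} (hα : α ≠ 0)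
    (hrel : ∀ m, ∑ j, α j * somos8Mat τ m 4 j = 0) (n : ℤ) : (somos8Mat τ n).det = 0 :=
  exists_mulVec_eq_zero_iff.mp ⟨α, hα, funext fun k => by
    simp only [mulVec, dotProduct, somos8Mat_apply_eq_lastRow τ n k, mul_comm _ (α _)]
    exact hrel _⟩

lemma exists_somos8_relation (hdet : ∀ n, (somos8Mat τ n).det = 0)
    (hmin : ∀ n, somos8Minor τ 0 n ≠ 0)
    (hrat : ∀ j n, somos8Minor τ j n * somos8Minor τ 0 (n + 1)
      = somos8Minor τ j (n + 1) * somos8Minor τ 0 n) :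
    ∃ α : Fin 5 → K, α ≠ 0 ∧ ∀ n, ∑ j, α j * somos8Mat τ n 4 j = 0 := by
  refine ⟨fun j => (-1) ^ (j : ℕ) * somos8Minor τ j 0,
    fun h => hmin 0 (by simpa using congrFun h 0), fun n => ?_⟩
  have hconst j := mul_eq_mul_of_mul_add_one_eq hmin (hrat j) n
  apply mul_left_cancel₀ (hmin n)
  calc somos8Minor τ 0 n * ∑ j : Fin 5, (-1) ^ (j : ℕ) * somos8Minor τ j 0 * somos8Mat τ n 4 j
        = somos8Minor τ 0 0 * (somos8Mat τ n).det := by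
        rw [det_somos8Mat_eq_sum, mul_sum, mul_sum]
        refine sum_congr rfl fun j _ => ?_
        linear_combination -(-1) ^ (j : ℕ) * somos8Mat τ n 4 j * hconst j
    _ = somos8Minor τ 0 n * 0 := by rw [hdet, mul_zero, mul_zero]

end Somos8

theorem somos8_det_criterion_general {K : Type*} [Field K] (τ : ℤ → K) :
    (∀ α₁ α₂ α₃ α₄ α₅ : K,
      ¬(α₁ = 0 ∧ α₂ = 0 ∧ α₃ = 0 ∧ α₄ = 0 ∧ α₅ = 0) →
      (∀ n : ℤ, α₁ * (τ (n + 8) * τ n) + α₂ * (τ (n + 7) * τ (n + 1))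
        + α₃ * (τ (n + 6) * τ (n + 2)) + α₄ * (τ (n + 5) * τ (n + 3))
        + α₅ * (τ (n + 4)) ^ 2 = 0) →
      ∀ n : ℤ, (somos8Mat τ n).det = 0) ∧
    ((∀ n : ℤ, (somos8Mat τ n).det = 0) →
      (∀ n : ℤ, somos8Minor τ 0 n ≠ 0) →
      (∀ j : Fin 5, ∀ n : ℤ,
        somos8Minor τ j n * somos8Minor τ 0 (n + 1)
          = somos8Minor τ j (n + 1) * somos8Minor τ 0 n) →
      ∃ α : Fin 5 → K, α ≠ 0 ∧
        ∀ n : ℤ, α 0 * (τ (n + 8) * τ n) + α 1 * (τ (n + 7) * τ (n + 1))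
          + α 2 * (τ (n + 6) * τ (n + 2)) + α 3 * (τ (n + 5) * τ (n + 3))
          + α 4 * (τ (n + 4)) ^ 2 = 0) := by
  refine ⟨fun α₁ α₂ α₃ α₄ α₅ hne hrel => ?_, fun hdet hmin hrat => ?_⟩
  · refine det_somos8Mat_eq_zero τ (α := ![α₁, α₂, α₃, α₄, α₅]) (fun h => hne ?_)
      fun m => ?_
    · exact ⟨congrFun h 0, congrFun h 1, congrFun h 2, congrFun h 3, congrFun h 4⟩
    · simpa [sum_mul_somos8Mat_lastRow] using hrel m
  · obtain ⟨α, hα, hrel⟩ := exists_somos8_relation τ hdet hmin hrat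
    exact ⟨α, hα, fun n => sum_mul_somos8Mat_lastRow τ α n ▸ hrel n⟩

/-- (a) A Somos-8 relation with coefficients not all zero forces the `5 × 5` determinant
of (5.4) to vanish for all `n`; (b) conversely, if the determinant vanishes for all `n`
and the ratios of the `4 × 4` minors `D̂_{j,n}/D̂_{1,n}` are independent of `n`
(with `D̂_{1,n} ≠ 0`), then `τ` satisfies a Somos-8 relation with constant coefficients. -/
theorem somos8_det_criterion {K : Type*} [Field K] (τ : ℤ → K) (hτ : ∀ n, τ n ≠ 0) :
    (∀ α₁ α₂ α₃ α₄ α₅ : K,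
      ¬(α₁ = 0 ∧ α₂ = 0 ∧ α₃ = 0 ∧ α₄ = 0 ∧ α₅ = 0) →
      (∀ n : ℤ, α₁ * (τ (n + 8) * τ n) + α₂ * (τ (n + 7) * τ (n + 1))
        + α₃ * (τ (n + 6) * τ (n + 2)) + α₄ * (τ (n + 5) * τ (n + 3))
        + α₅ * (τ (n + 4)) ^ 2 = 0) →
      ∀ n : ℤ, (somos8Mat τ n).det = 0) ∧
    ((∀ n : ℤ, (somos8Mat τ n).det = 0) →
      (∀ n : ℤ, somos8Minor τ 0 n ≠ 0) →
      (∀ j : Fin 5, ∀ n : ℤ,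
        somos8Minor τ j n * somos8Minor τ 0 (n + 1)
          = somos8Minor τ j (n + 1) * somos8Minor τ 0 n) →
      ∃ α : Fin 5 → K, α ≠ 0 ∧
        ∀ n : ℤ, α 0 * (τ (n + 8) * τ n) + α 1 * (τ (n + 7) * τ (n + 1))
          + α 2 * (τ (n + 6) * τ (n + 2)) + α 3 * (τ (n + 5) * τ (n + 3))
          + α 4 * (τ (n + 4)) ^ 2 = 0) :=
  somos8_det_criterion_general τ
end
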